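/- arXiv:2507.04568 — 5 statements merged into one kernel-verified Lean document; each statement's English description precedes it below -/
import Mathlib

section
/- Predict step equivalence (Lemma 2, matrix Riccati ODE form). Let t₀ ≤ t₁ be reals. Let M, Σ_L, Σ_R, A_L, A_R, N : ℝ → Matrix m m ℝ, B_L ∈ Matrix m ℓ ℝ, B_R : ℝ → Matrix m ℓ ℝ, and Q ∈ Matrix ℓ ℓ ℝ. Assume for every t ∈ [t₀, t₁]: M t is invertible; M has derivative M t * N t at t; Σ_L has derivative A_L t * Σ_L t + Σ_L t * (A_L t)ᵀ + B_L * Q * B_Lᵀ at t; Σ_R has derivative A_R t * Σ_R t + Σ_R t * (A_R t)ᵀ + B_R t * Q * (B_R t)ᵀ at t; A_R t = M t * (A_L t + N t) * (M t)⁻¹ and B_R t = M t * B_L; and A_R and B_R are continuous on [t₀, t₁]. If Σ_R t₀ = M t₀ * Σ_L t₀ * (M t₀)ᵀ, then Σ_R t = M t * Σ_L t * (M t)ᵀ for all t ∈ [t₀, t₁]. -/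
open Matrix

attribute [local instance] Matrix.normedAddCommGroup Matrix.normedSpace

theorem my_norm_mul_le {n p q : ℕ} (A : Matrix (Fin n) (Fin p) ℝ)
    (B : Matrix (Fin p) (Fin q) ℝ) : ‖A * B‖ ≤ p * ‖A‖ * ‖B‖ := by
  have h0 : (0:ℝ) ≤ p * ‖A‖ * ‖B‖ := by positivity
  rw [Matrix.norm_le_iff h0]
  intro i j
  calc ‖(A * B) i j‖ = ‖∑ k, A i k * B k j‖ := by rw [Matrix.mul_apply]
    _ ≤ ∑ k, ‖A i k * B k j‖ := norm_sum_le _ _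
    _ ≤ ∑ _k : Fin p, ‖A‖ * ‖B‖ := by
        refine Finset.sum_le_sum fun k _ => ?_
        rw [norm_mul]
        exact mul_le_mul (Matrix.norm_entry_le_entrywise_sup_norm A)
          (Matrix.norm_entry_le_entrywise_sup_norm B) (norm_nonneg _) (norm_nonneg _)
    _ = p * ‖A‖ * ‖B‖ := by simp [mul_assoc]

theorem my_hasDerivAt_mul {n p q : ℕ} {f : ℝ → Matrix (Fin n) (Fin p) ℝ}
    {g : ℝ → Matrix (Fin p) (Fin q) ℝ} {f' : Matrix (Fin n) (Fin p) ℝ}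
    {g' : Matrix (Fin p) (Fin q) ℝ} {t : ℝ}
    (hf : HasDerivAt f f' t) (hg : HasDerivAt g g' t) :
    HasDerivAt (fun s => f s * g s) (f' * g t + f t * g') t := by
  refine hasDerivAt_pi.mpr ?_
  intro i
  rw [hasDerivAt_pi]
  intro j
  have hfe : ∀ a b, HasDerivAt (fun s => f s a b) (f' a b) t := fun a b =>
    (hasDerivAt_pi.mp ((hasDerivAt_pi.mp hf) a)) b
  have hge : ∀ a b, HasDerivAt (fun s => g s a b) (g' a b) t := fun a b =>
    (hasDerivAt_pi.mp ((hasDerivAt_pi.mp hg) a)) b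
  have : HasDerivAt (fun s => ∑ k, f s i k * g s k j)
      (∑ k, (f' i k * g t k j + f t i k * g' k j)) t :=
    HasDerivAt.fun_sum fun k _ => (hfe i k).mul (hge k j)
  convert this using 2
  · rfl
  · rfl
  all_goals
    simp [Matrix.mul_apply, Matrix.add_apply, Finset.sum_add_distrib]

theorem my_hasDerivAt_transpose {n p : ℕ} {f : ℝ → Matrix (Fin n) (Fin p) ℝ}
    {f' : Matrix (Fin n) (Fin p) ℝ} {t : ℝ} (hf : HasDerivAt f f' t) :
    HasDerivAt (fun s => (f s)ᵀ) f'ᵀ t := by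
  refine hasDerivAt_pi.mpr ?_
  intro i
  rw [hasDerivAt_pi]
  intro j
  exact (hasDerivAt_pi.mp ((hasDerivAt_pi.mp hf) j)) i

theorem riccati_algebra {m l : ℕ} (M Minv S A N : Matrix (Fin m) (Fin m) ℝ)
    (B : Matrix (Fin m) (Fin l) ℝ) (Q : Matrix (Fin l) (Fin l) ℝ)
    (h : Minv * M = 1) :
    (M * (A + N) * Minv) * (M * S * Mᵀ) + (M * S * Mᵀ) * (M * (A + N) * Minv)ᵀ
      + (M * B) * Q * (M * B)ᵀ
    = (M * N * S + M * (A * S + S * Aᵀ + B * Q * Bᵀ)) * Mᵀ + (M * S) * (M * N)ᵀ := by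
  have h2 : Mᵀ * Minvᵀ = 1 := by rw [← Matrix.transpose_mul, h, Matrix.transpose_one]
  have e1 : M * (A + N) * Minv * (M * S * Mᵀ) = M * ((A + N) * (S * Mᵀ)) := by
    calc M * (A + N) * Minv * (M * S * Mᵀ)
        = M * ((A + N) * ((Minv * M) * (S * Mᵀ))) := by simp only [Matrix.mul_assoc]
      _ = M * ((A + N) * (S * Mᵀ)) := by rw [h, Matrix.one_mul]
  have e2 : (M * S * Mᵀ) * (M * (A + N) * Minv)ᵀ = M * (S * ((A + N)ᵀ * Mᵀ)) := by
    calc (M * S * Mᵀ) * (M * (A + N) * Minv)ᵀ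
        = M * (S * ((Mᵀ * Minvᵀ) * ((A + N)ᵀ * Mᵀ))) := by
          simp only [Matrix.transpose_mul, Matrix.mul_assoc]
      _ = M * (S * ((A + N)ᵀ * Mᵀ)) := by rw [h2, Matrix.one_mul]
  rw [e1, e2]
  simp only [Matrix.transpose_mul, Matrix.transpose_add, Matrix.mul_add, Matrix.add_mul,
    Matrix.mul_assoc]
  abel

/-- **Predict step equivalence** (Lemma 2, matrix Riccati ODE form).
If `Σ_L` and `Σ_R` solve the left- and right-handed covariance Riccati
equations, the linearisation data are related by `A_R = M (A_L + N) M⁻¹`,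
`B_R = M B_L` where `M' = M N`, and the initial covariances are related by
`Σ_R t₀ = M t₀ Σ_L t₀ (M t₀)ᵀ`, then `Σ_R t = M t Σ_L t (M t)ᵀ` on `[t₀, t₁]`. -/
theorem predict_step_equivalence {m l : ℕ} (t₀ t₁ : ℝ) (ht : t₀ ≤ t₁)
    (M SigL SigR AL AR N : ℝ → Matrix (Fin m) (Fin m) ℝ)
    (BL : Matrix (Fin m) (Fin l) ℝ) (BR : ℝ → Matrix (Fin m) (Fin l) ℝ)
    (Q : Matrix (Fin l) (Fin l) ℝ)
    (hMunit : ∀ t ∈ Set.Icc t₀ t₁, IsUnit (M t))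
    (hM : ∀ t ∈ Set.Icc t₀ t₁, HasDerivAt M (M t * N t) t)
    (hSigL : ∀ t ∈ Set.Icc t₀ t₁,
      HasDerivAt SigL (AL t * SigL t + SigL t * (AL t)ᵀ + BL * Q * BLᵀ) t)
    (hSigR : ∀ t ∈ Set.Icc t₀ t₁,
      HasDerivAt SigR (AR t * SigR t + SigR t * (AR t)ᵀ + BR t * Q * (BR t)ᵀ) t)
    (hAR : ∀ t ∈ Set.Icc t₀ t₁, AR t = M t * (AL t + N t) * (M t)⁻¹)
    (hBR : ∀ t ∈ Set.Icc t₀ t₁, BR t = M t * BL)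
    (hARcont : ContinuousOn AR (Set.Icc t₀ t₁))
    (hBRcont : ContinuousOn BR (Set.Icc t₀ t₁))
    (hinit : SigR t₀ = M t₀ * SigL t₀ * (M t₀)ᵀ) :
    ∀ t ∈ Set.Icc t₀ t₁, SigR t = M t * SigL t * (M t)ᵀ := by
  -- bound on AR over the compact interval
  obtain ⟨C₀, hC₀⟩ := (isCompact_Icc : IsCompact (Set.Icc t₀ t₁)).exists_bound_of_continuousOn
    hARcont
  set C : ℝ := max C₀ 0 with hCdef
  have hCnn : (0:ℝ) ≤ C := le_max_right _ _
  have hC : ∀ s ∈ Set.Icc t₀ t₁, ‖AR s‖ ≤ C := fun s hs =>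
    le_trans (hC₀ s hs) (le_max_left _ _)
  set K : NNReal := Real.toNNReal (2 * m * C) with hKdef
  have hKcoe : (K : ℝ) = 2 * m * C := Real.coe_toNNReal _ (by positivity)
  -- the vector field, extended outside the interval via projection
  set w : ℝ → Matrix (Fin m) (Fin m) ℝ → Matrix (Fin m) (Fin m) ℝ :=
    fun s P =>
      AR (Set.projIcc t₀ t₁ ht s : ℝ) * P + P * (AR (Set.projIcc t₀ t₁ ht s : ℝ))ᵀ
        + BR (Set.projIcc t₀ t₁ ht s : ℝ) * Q * (BR (Set.projIcc t₀ t₁ ht s : ℝ))ᵀ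
    with hwdef
  have hwIcc : ∀ s ∈ Set.Icc t₀ t₁, ∀ P,
      w s P = AR s * P + P * (AR s)ᵀ + BR s * Q * (BR s)ᵀ := by
    intro s hs P
    rw [hwdef]
    simp [Set.projIcc_of_mem ht hs]
  have hw : ∀ s, LipschitzWith K (w s) := by
    intro s
    apply LipschitzWith.of_dist_le_mul
    intro P P'
    have hu : (Set.projIcc t₀ t₁ ht s : ℝ) ∈ Set.Icc t₀ t₁ := (Set.projIcc t₀ t₁ ht s).2
    set u : ℝ := (Set.projIcc t₀ t₁ ht s : ℝ)
    have hdiff : w s P - w s P' = AR u * (P - P') + (P - P') * (AR u)ᵀ := by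
      rw [hwdef]
      simp only [Matrix.mul_sub, Matrix.sub_mul]
      abel
    rw [dist_eq_norm, dist_eq_norm, hdiff, hKcoe]
    calc ‖AR u * (P - P') + (P - P') * (AR u)ᵀ‖
        ≤ ‖AR u * (P - P')‖ + ‖(P - P') * (AR u)ᵀ‖ := norm_add_le _ _
      _ ≤ m * ‖AR u‖ * ‖P - P'‖ + m * ‖P - P'‖ * ‖(AR u)ᵀ‖ :=
          add_le_add (my_norm_mul_le _ _) (my_norm_mul_le _ _)
      _ ≤ m * C * ‖P - P'‖ + m * ‖P - P'‖ * C := by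
          rw [Matrix.norm_transpose]
          gcongr <;> exact hC u hu
      _ = 2 * m * C * ‖P - P'‖ := by ring
  -- the transported solution
  set g : ℝ → Matrix (Fin m) (Fin m) ℝ := fun s => M s * SigL s * (M s)ᵀ with hgdef
  have hgd : ∀ s ∈ Set.Icc t₀ t₁, HasDerivAt g (w s (g s)) s := by
    intro s hs
    have hd := my_hasDerivAt_mul (my_hasDerivAt_mul (hM s hs) (hSigL s hs))
      (my_hasDerivAt_transpose (hM s hs))
    have hinv : (M s)⁻¹ * M s = 1 :=
      Matrix.nonsing_inv_mul _ ((Matrix.isUnit_iff_isUnit_det _).mp (hMunit s hs))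
    have halg := riccati_algebra (M s) ((M s)⁻¹) (SigL s) (AL s) (N s) BL Q hinv
    rw [hwIcc s hs, hgdef]
    simp only [hAR s hs, hBR s hs]
    rw [halg]
    exact hd
  have hfd : ∀ s ∈ Set.Icc t₀ t₁, HasDerivAt SigR (w s (SigR s)) s := by
    intro s hs
    rw [hwIcc s hs]
    exact hSigR s hs
  have key : Set.EqOn SigR g (Set.Icc t₀ t₁) := by
    apply ODE_solution_unique_of_mem_Icc_right
      (v := w) (s := fun _ => Set.univ) (fun s _ => (hw s).lipschitzOnWith)
      (fun s hs => (hfd s hs).continuousAt.continuousWithinAt)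
      (fun s hs => ((hfd s (Set.mem_Icc_of_Ico hs)).hasDerivWithinAt))
      (fun _ _ => trivial)
      (fun s hs => (hgd s hs).continuousAt.continuousWithinAt)
      (fun s hs => ((hgd s (Set.mem_Icc_of_Ico hs)).hasDerivWithinAt))
      (fun _ _ => trivial)
    exact hinit
  exact fun t htm => key htm
end

section
/- Conjugated Riccati derivative identity (core computation of Lemma 2). Fix t ∈ ℝ. Let M, Σ : ℝ → Matrix m m ℝ and A, N ∈ Matrix m m ℝ, B ∈ Matrix m ℓ ℝ, Q ∈ Matrix ℓ ℓ ℝ. Assume M t is invertible, M has derivative M t * N at t, and Σ has derivative A * Σ t + Σ t * Aᵀ + B * Q * Bᵀ at t. Then, with P := M t * Σ t * (M t)ᵀ and Ā := M t * (A + N) * (M t)⁻¹, the function s ↦ M s * Σ s * (M s)ᵀ has derivative Ā * P + P * Āᵀ + (M t * B) * Q * (M t * B)ᵀ at t. -/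
open Matrix

attribute [local instance] Matrix.normedAddCommGroup Matrix.normedSpace

noncomputable def mulCLM (m n p : ℕ) :
    Matrix (Fin m) (Fin n) ℝ →L[ℝ] Matrix (Fin n) (Fin p) ℝ →L[ℝ] Matrix (Fin m) (Fin p) ℝ :=
  LinearMap.toContinuousLinearMap
    ((LinearMap.toContinuousLinearMap.toLinearMap).comp
      (LinearMap.mk₂ ℝ (fun X Y => X * Y) Matrix.add_mul
        (fun c X Y => Matrix.smul_mul c X Y) Matrix.mul_add
        (fun c X Y => Matrix.mul_smul X c Y)))

lemma mulCLM_apply {m n p : ℕ} (X : Matrix (Fin m) (Fin n) ℝ) (Y : Matrix (Fin n) (Fin p) ℝ) :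
    mulCLM m n p X Y = X * Y := rfl

lemma HasDerivAt.matMul {m n p : ℕ} {t : ℝ} {f : ℝ → Matrix (Fin m) (Fin n) ℝ}
    {g : ℝ → Matrix (Fin n) (Fin p) ℝ} {f' : Matrix (Fin m) (Fin n) ℝ}
    {g' : Matrix (Fin n) (Fin p) ℝ}
    (hf : HasDerivAt f f' t) (hg : HasDerivAt g g' t) :
    HasDerivAt (fun s => f s * g s) (f' * g t + f t * g') t := by
  simpa [mulCLM_apply, add_comm] using! (mulCLM m n p).hasDerivAt_of_bilinear (fun _ => hf) (fun _ => hg)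

/-- **Conjugated Riccati derivative identity** (core computation of Lemma 2).
If `M' = M N` and `Σ' = A Σ + Σ Aᵀ + B Q Bᵀ` at `t`, then `P := M Σ Mᵀ`
satisfies the Riccati equation with state matrix `Ā = M (A + N) M⁻¹` and
input matrix `M B` at `t`. -/
theorem conjugated_riccati_derivative {m l : ℕ} (t : ℝ)
    (M Sig : ℝ → Matrix (Fin m) (Fin m) ℝ)
    (A N : Matrix (Fin m) (Fin m) ℝ)
    (B : Matrix (Fin m) (Fin l) ℝ) (Q : Matrix (Fin l) (Fin l) ℝ)
    (hMunit : IsUnit (M t))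
    (hM : HasDerivAt M (M t * N) t)
    (hSig : HasDerivAt Sig (A * Sig t + Sig t * Aᵀ + B * Q * Bᵀ) t) :
    HasDerivAt (fun s => M s * Sig s * (M s)ᵀ)
      ((M t * (A + N) * (M t)⁻¹) * (M t * Sig t * (M t)ᵀ) +
        (M t * Sig t * (M t)ᵀ) * (M t * (A + N) * (M t)⁻¹)ᵀ +
        (M t * B) * Q * (M t * B)ᵀ) t := by
  have hdet : IsUnit (M t).det := (Matrix.isUnit_iff_isUnit_det _).mp hMunit
  have hinv : (M t)⁻¹ * M t = 1 := Matrix.nonsing_inv_mul _ hdet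
  have hT : HasDerivAt (fun s => (M s)ᵀ) (M t * N)ᵀ t := by
    have := ((Matrix.transposeLinearEquiv (Fin m) (Fin m) ℝ
      ℝ).toLinearMap.toContinuousLinearMap).hasFDerivAt.comp_hasDerivAt t hM
    exact this
  have hD := (hM.matMul hSig).matMul hT
  convert hD using 1
  have hTinv : (M t)ᵀ * ((M t)⁻¹)ᵀ = 1 := by
    rw [← Matrix.transpose_mul, hinv, Matrix.transpose_one]
  have key : ∀ X : Matrix (Fin m) (Fin m) ℝ, (M t)⁻¹ * (M t * X) = X := fun X => by
    rw [← Matrix.mul_assoc, hinv, Matrix.one_mul]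
  have hinvT : (M t)ᵀ⁻¹ * (M t)ᵀ = 1 := by
    rw [← Matrix.transpose_nonsing_inv, ← Matrix.transpose_mul,
      Matrix.mul_nonsing_inv _ hdet, Matrix.transpose_one]
  have keyT : ∀ X : Matrix (Fin m) (Fin m) ℝ, (M t)ᵀ⁻¹ * ((M t)ᵀ * X) = X := fun X => by
    rw [← Matrix.mul_assoc, hinvT, Matrix.one_mul]
  have keyT2 : ∀ X : Matrix (Fin m) (Fin m) ℝ, (M t)ᵀ * ((M t)ᵀ⁻¹ * X) = X := fun X => by
    rw [← Matrix.mul_assoc, ← Matrix.transpose_nonsing_inv, ← Matrix.transpose_mul, hinv,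
      Matrix.transpose_one, Matrix.one_mul]
  simp only [Matrix.transpose_mul, Matrix.transpose_nonsing_inv, Matrix.transpose_add,
    Matrix.add_mul, Matrix.mul_add, Matrix.mul_assoc, key, keyT, keyT2]
  abel
end

section
/- Right-invariant error dynamics (deterministic part). Let X, X̂ : ℝ → Matrix n n ℝ, fix t ∈ ℝ, and let Λ, Λ̂ ∈ Matrix n n ℝ. Suppose X̂ t is invertible, X has derivative X t * Λ at t, and X̂ has derivative X̂ t * Λ̂ at t. Then the right-invariant error E(s) := X s * Ring.inverse (X̂ s) has derivative E t * (X̂ t * (Λ − Λ̂) * (X̂ t)⁻¹) at t, where E t = X t * (X̂ t)⁻¹; that is, Ė_R = E_R · Ad_{X̂}(Λ − Λ̂). -/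
open Matrix

attribute [local instance] Matrix.normedAddCommGroup Matrix.normedSpace

section Aux

variable {n : ℕ}

noncomputable def matCLE :
    Matrix (Fin n) (Fin n) ℝ ≃L[ℝ] ((Fin n → ℝ) →L[ℝ] (Fin n → ℝ)) :=
  ((Matrix.toLinAlgEquiv' :
      Matrix (Fin n) (Fin n) ℝ ≃ₐ[ℝ] ((Fin n → ℝ) →ₗ[ℝ] (Fin n → ℝ))).toLinearEquiv.trans
    (LinearMap.toContinuousLinearMap :
      ((Fin n → ℝ) →ₗ[ℝ] (Fin n → ℝ)) ≃ₗ[ℝ] ((Fin n → ℝ) →L[ℝ] (Fin n → ℝ)))).toContinuousLinearEquiv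

lemma matCLE_mul (A B : Matrix (Fin n) (Fin n) ℝ) :
    matCLE (A * B) = matCLE A * matCLE B := by
  ext x
  simp [matCLE, Matrix.mulVec_mulVec]

noncomputable def matRE :
    Matrix (Fin n) (Fin n) ℝ ≃+* ((Fin n → ℝ) →L[ℝ] (Fin n → ℝ)) :=
  { (matCLE : Matrix (Fin n) (Fin n) ℝ ≃L[ℝ] _).toLinearEquiv.toAddEquiv with
    map_mul' := matCLE_mul }

lemma matRE_apply (A : Matrix (Fin n) (Fin n) ℝ) : matRE A = matCLE A := rfl

lemma matCLE_symm_matRE (x : Matrix (Fin n) (Fin n) ℝ) :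
    matCLE.symm (matRE x) = x :=
  matCLE.symm_apply_apply x

lemma ringEquiv_ringInverse {R S : Type*} [Ring R] [Ring S] (e : R ≃+* S) (a : R) :
    e (Ring.inverse a) = Ring.inverse (e a) := by
  by_cases h : IsUnit a
  · rcases h with ⟨u, rfl⟩
    have hu : e ↑u = ↑(Units.map (e : R →* S) u) := rfl
    rw [Ring.inverse_unit, hu, Ring.inverse_unit]
    rfl
  · have h' : ¬ IsUnit (e a) := by
      intro hu
      exact h (by simpa using hu.map e.symm)
    rw [Ring.inverse_non_unit _ h, Ring.inverse_non_unit _ h', map_zero]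

end Aux

set_option maxHeartbeats 1000000 in
/-- **Right-invariant error dynamics (deterministic part).**
For trajectories `X' = X Λ` and `X̂' = X̂ Λ̂`, the right-invariant error
`E = X X̂⁻¹` satisfies `E' = E · Ad_{X̂}(Λ - Λ̂)`. -/
theorem right_invariant_error_dynamics {n : ℕ}
    (X Xhat : ℝ → Matrix (Fin n) (Fin n) ℝ) (t : ℝ)
    (Lam LamHat : Matrix (Fin n) (Fin n) ℝ)
    (hXhatUnit : IsUnit (Xhat t))
    (hX : HasDerivAt X (X t * Lam) t)
    (hXhat : HasDerivAt Xhat (Xhat t * LamHat) t) :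
    HasDerivAt (fun s => X s * Ring.inverse (Xhat s))
      ((X t * (Xhat t)⁻¹) * (Xhat t * (Lam - LamHat) * (Xhat t)⁻¹)) t := by
  classical
  -- transfer derivatives through the continuous linear equivalence
  have hX' : HasDerivAt (fun s => matRE (X s)) (matRE (X t * Lam)) t := by
    exact
      (matCLE.toContinuousLinearMap.hasFDerivAt).comp_hasDerivAt t hX
  have hXhat' : HasDerivAt (fun s => matRE (Xhat s)) (matRE (Xhat t * LamHat)) t := by
    exact
      (matCLE.toContinuousLinearMap.hasFDerivAt).comp_hasDerivAt t hXhat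
  have hUnit' : IsUnit (matRE (Xhat t)) := hXhatUnit.map matRE
  -- derivative of the inverse in the CLM algebra
  have hinv' : HasDerivAt (fun s => Ring.inverse (matRE (Xhat s)))
      (-(Ring.inverse (matRE (Xhat t)) * (matRE (Xhat t * LamHat)) *
        Ring.inverse (matRE (Xhat t)))) t := by
    obtain ⟨u, hu⟩ := hUnit'
    have hf := hasFDerivAt_ringInverse (𝕜 := ℝ) u
    rw [hu] at hf
    have hucoe : ((u⁻¹ : ((Fin n → ℝ) →L[ℝ] (Fin n → ℝ))ˣ) : ((Fin n → ℝ) →L[ℝ] (Fin n → ℝ))) =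
        Ring.inverse (matRE (Xhat t)) := by
      rw [← hu, Ring.inverse_unit]
    have h3 := hf.comp_hasDerivAt t hXhat'
    rw [hucoe] at h3
    simpa [Function.comp_def] using h3
  have hprod := hX'.mul hinv'
  -- pull back through matCLE.symm
  have key : HasDerivAt (fun s => X s * Ring.inverse (Xhat s))
      (X t * Lam * Ring.inverse (Xhat t) +
        X t * -(Ring.inverse (Xhat t) * (Xhat t * LamHat) * Ring.inverse (Xhat t))) t := by
    have h2 : HasDerivAt (fun s => matCLE.symm (matRE (X s) * Ring.inverse (matRE (Xhat s))))
        (matCLE.symm (matRE (X t * Lam) * Ring.inverse (matRE (Xhat t)) +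
          matRE (X t) * -(Ring.inverse (matRE (Xhat t)) * matRE (Xhat t * LamHat) *
            Ring.inverse (matRE (Xhat t))))) t :=
      (matCLE.symm.toContinuousLinearMap.hasFDerivAt).comp_hasDerivAt t hprod
    have heq : ∀ A B : Matrix (Fin n) (Fin n) ℝ,
        matCLE.symm (matRE A * Ring.inverse (matRE B)) = A * Ring.inverse B := by
      intro A B
      rw [← ringEquiv_ringInverse matRE B, ← _root_.map_mul]
      exact matCLE_symm_matRE _
    have heq2 : matCLE.symm (matRE (X t * Lam) * Ring.inverse (matRE (Xhat t)) +
          matRE (X t) * -(Ring.inverse (matRE (Xhat t)) * matRE (Xhat t * LamHat) *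
            Ring.inverse (matRE (Xhat t)))) =
        X t * Lam * Ring.inverse (Xhat t) +
          X t * -(Ring.inverse (Xhat t) * (Xhat t * LamHat) * Ring.inverse (Xhat t)) := by
      rw [← ringEquiv_ringInverse matRE (Xhat t)]
      simp only [← _root_.map_mul, ← map_neg, ← map_add]
      exact matCLE_symm_matRE _
    rw [heq2] at h2
    exact h2.congr_of_eventuallyEq
      (Filter.Eventually.of_forall fun s => (heq (X s) (Xhat s)).symm)
  -- algebraic identification of the derivative
  have hri : Ring.inverse (Xhat t) = (Xhat t)⁻¹ := (Matrix.nonsing_inv_eq_ringInverse _).symm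
  rw [hri] at key
  convert key using 1
  have h1 : (Xhat t)⁻¹ * Xhat t = 1 :=
    Matrix.nonsing_inv_mul _ ((Matrix.isUnit_iff_isUnit_det _).mp hXhatUnit)
  have h1' : X t * (Xhat t)⁻¹ * Xhat t = X t := by rw [mul_assoc, h1, mul_one]
  simp only [mul_neg, ← mul_assoc]
  rw [h1', mul_sub, sub_mul, sub_eq_add_neg]
end

section
/- Measurement update equivalence (Lemma 3, matrix form). Let Σ_L ∈ Matrix m m ℝ, C_L ∈ Matrix p m ℝ, R ∈ Matrix p p ℝ, and let M ∈ Matrix m m ℝ be invertible. Define Σ_R := M * Σ_L * Mᵀ, C_R := C_L * M⁻¹, S_L := C_L * Σ_L * C_Lᵀ + R, S_R := C_R * Σ_R * C_Rᵀ + R, and assume S_L is invertible. Define the Kalman gains K_L := Σ_L * C_Lᵀ * S_L⁻¹ and K_R := Σ_R * C_Rᵀ * S_R⁻¹. Then: (i) S_R = S_L; (ii) K_R = M * K_L, so for every residual z ∈ ℝ^p the updated means satisfy μ_R⁺ := K_R ⬝ z = M ⬝ (K_L ⬝ z) = M ⬝ μ_L⁺; and (iii) the updated covariances satisfy (1 −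 K_R * C_R) * Σ_R = M * ((1 − K_L * C_L) * Σ_L) * Mᵀ. -/
open Matrix

/-!
Passing from left- to right-invariant coordinates is the change of basis `M`: the covariance
transforms by congruence, `Σ ↦ M Σ Mᵀ`, and the output matrix by `C ↦ C M⁻¹`. The factors `M⁻¹`
and `Mᵀ⁻¹ = (M⁻¹)ᵀ` cancel against `M` and `Mᵀ`, so the cross covariance `Σ Cᵀ` is simply
multiplied by `M` and the innovation covariance `C Σ Cᵀ + R` does not change at all. The gain
and the update then transform as the state does.
-/

noncomputable section KalmanUpdate

variable {m n α : Type*} [Fintype m] [DecidableEq m] [CommRing α] {M : Matrix m m α}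
  (Sig : Matrix m m α) (C : Matrix n m α) (R : Matrix n n α)

theorem crossCov_conj (hM : IsUnit M) : M * Sig * Mᵀ * (C * M⁻¹)ᵀ = M * (Sig * Cᵀ) := by
  have hMt : IsUnit Mᵀ.det := by simpa using (isUnit_iff_isUnit_det M).mp hM
  rw [transpose_mul, transpose_nonsing_inv, Matrix.mul_assoc, Matrix.mul_assoc,
    mul_nonsing_inv_cancel_left _ _ hMt]

def innovationCov : Matrix n n α := C * Sig * Cᵀ + R

theorem innovationCov_conj (hM : IsUnit M) :
    innovationCov (M * Sig * Mᵀ) (C * M⁻¹) R = innovationCov Sig C R := by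
  have hMd : IsUnit M.det := (isUnit_iff_isUnit_det M).mp hM
  rw [innovationCov, innovationCov, Matrix.mul_assoc (C * M⁻¹), crossCov_conj Sig C hM,
    Matrix.mul_assoc C, nonsing_inv_mul_cancel_left _ _ hMd, Matrix.mul_assoc]

variable [Fintype n] [DecidableEq n]

def kalmanGain : Matrix m n α :=
  Sig * Cᵀ * (innovationCov Sig C R)⁻¹

def updatedCov : Matrix m m α :=
  (1 - kalmanGain Sig C R * C) * Sig

theorem kalmanGain_conj (hM : IsUnit M) :
    kalmanGain (M * Sig * Mᵀ) (C * M⁻¹) R = M * kalmanGain Sig C R := by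
  rw [kalmanGain, kalmanGain, innovationCov_conj Sig C R hM, crossCov_conj Sig C hM,
    Matrix.mul_assoc M, Matrix.mul_assoc]

theorem updatedCov_conj (hM : IsUnit M) :
    updatedCov (M * Sig * Mᵀ) (C * M⁻¹) R = M * updatedCov Sig C R * Mᵀ := by
  have hMd : IsUnit M.det := (isUnit_iff_isUnit_det M).mp hM
  have hKC : M * kalmanGain Sig C R * (C * M⁻¹) * (M * Sig * Mᵀ) =
      M * (kalmanGain Sig C R * C * Sig) * Mᵀ := by
    simp only [Matrix.mul_assoc]
    rw [nonsing_inv_mul_cancel_left _ _ hMd]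
  rw [updatedCov, updatedCov, kalmanGain_conj Sig C R hM, Matrix.sub_mul, Matrix.one_mul, hKC,
    Matrix.sub_mul, Matrix.one_mul, Matrix.mul_sub, Matrix.sub_mul, Matrix.mul_assoc M Sig]

end KalmanUpdate

theorem measurement_update_equivalence_general {m p : ℕ}
    (SigL : Matrix (Fin m) (Fin m) ℝ)
    (CL : Matrix (Fin p) (Fin m) ℝ)
    (R : Matrix (Fin p) (Fin p) ℝ)
    (M : Matrix (Fin m) (Fin m) ℝ) (hM : IsUnit M)
    (SigR : Matrix (Fin m) (Fin m) ℝ) (hSigR : SigR = M * SigL * Mᵀ)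
    (CR : Matrix (Fin p) (Fin m) ℝ) (hCR : CR = CL * M⁻¹)
    (SL SR : Matrix (Fin p) (Fin p) ℝ)
    (hSL : SL = CL * SigL * CLᵀ + R)
    (hSR : SR = CR * SigR * CRᵀ + R)
    (KL : Matrix (Fin m) (Fin p) ℝ) (hKL : KL = SigL * CLᵀ * SL⁻¹)
    (KR : Matrix (Fin m) (Fin p) ℝ) (hKR : KR = SigR * CRᵀ * SR⁻¹) :
    SR = SL ∧
    (KR = M * KL ∧ ∀ z : Fin p → ℝ, KR *ᵥ z = M *ᵥ (KL *ᵥ z)) ∧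
    (1 - KR * CR) * SigR = M * ((1 - KL * CL) * SigL) * Mᵀ := by
  subst SigR CR SL SR KL KR
  have hK := kalmanGain_conj SigL CL R hM
  refine ⟨innovationCov_conj SigL CL R hM, ⟨hK, fun z => ?_⟩, updatedCov_conj SigL CL R hM⟩
  rw [mulVec_mulVec]
  exact congrArg (· *ᵥ z) hK

/-- **Measurement update equivalence** (Lemma 3, matrix form).
With `Σ_R = M Σ_L Mᵀ` and `C_R = C_L M⁻¹the innovation covariances agree,
the gains satisfy `K_R = M K_L` (so the updated means satisfy
`K_R z = M (K_L z)` for every residual `z`), and the updated covariances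
satisfy `(1 - K_R C_R) Σ_R = M ((1 - K_L C_L) Σ_L) Mᵀ`. -/
theorem measurement_update_equivalence {m p : ℕ}
    (SigL : Matrix (Fin m) (Fin m) ℝ)
    (CL : Matrix (Fin p) (Fin m) ℝ)
    (R : Matrix (Fin p) (Fin p) ℝ)
    (M : Matrix (Fin m) (Fin m) ℝ) (hM : IsUnit M)
    (SigR : Matrix (Fin m) (Fin m) ℝ) (hSigR : SigR = M * SigL * Mᵀ)
    (CR : Matrix (Fin p) (Fin m) ℝ) (hCR : CR = CL * M⁻¹)
    (SL SR : Matrix (Fin p) (Fin p) ℝ)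
    (hSL : SL = CL * SigL * CLᵀ + R)
    (hSR : SR = CR * SigR * CRᵀ + R)
    (hSLunit : IsUnit SL)
    (KL : Matrix (Fin m) (Fin p) ℝ) (hKL : KL = SigL * CLᵀ * SL⁻¹)
    (KR : Matrix (Fin m) (Fin p) ℝ) (hKR : KR = SigR * CRᵀ * SR⁻¹) :
    SR = SL ∧
    (KR = M * KL ∧ ∀ z : Fin p → ℝ, KR *ᵥ z = M *ᵥ (KL *ᵥ z)) ∧
    (1 - KR * CR) * SigR = M * ((1 - KL * CL) * SigL) * Mᵀ :=
  measurement_update_equivalence_general SigL CL R M hM SigR hSigR CR hCR SL SR hSL hSR KL hKL KR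
    hKR
end

section
/- Relation between discrete-time L-IEKF and R-IEKF state matrices (Appendix, equation A_R = Ad_{x̂⁻} ∘ A_L ∘ Ad_{x̂}⁻¹). Let Γ : Matrix n n ℝ → Matrix n n ℝ, let x̂ ∈ Matrix n n ℝ be invertible, suppose Γ has Fréchet derivative D at x̂, and suppose Γ(x̂) is invertible. Set x̂⁻ := x̂ * Γ(x̂) (the predicted reference, which is invertible). Define linear maps on Matrix n n ℝ by A_L(ε) := Γ(x̂)⁻¹ * ε * Γ(x̂) + Γ(x̂)⁻¹ * D(x̂ * ε) and A_R(ε) := ε + x̂ * D(ε * x̂) * Γ(x̂)⁻¹ * x̂⁻¹. Then for every ε ∈ Matrix n n ℝ: A_R(ε) = x̂⁻ * A_L(x̂⁻¹ * ε * x̂) * (x̂⁻)⁻¹. -/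
open Matrix

section StateMaps

variable {R : Type*} [Ring R]

-- The paper's `A_L` and `A_R`, with `x = x̂`, `g = Γ(x̂)` and `D` the derivative of `Γ` at `x̂`.
def leftStateMap (x g : Rˣ) (D : R → R) (ε : R) : R :=
  ↑g⁻¹ * ε * g + ↑g⁻¹ * D (x * ε)

def rightStateMap (x g : Rˣ) (D : R → R) (ε : R) : R :=
  ε + x * D (ε * x) * ↑g⁻¹ * ↑x⁻¹

theorem rightStateMap_eq_conj_leftStateMap (x g : Rˣ) (D : R → R) (ε : R) :
    rightStateMap x g D ε = ↑(x * g) * leftStateMap x g D (↑x⁻¹ * ε * x) * ↑(x * g)⁻¹ := by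
  simp only [leftStateMap, rightStateMap, _root_.mul_inv_rev, Units.val_mul, mul_add, add_mul,
    mul_assoc, Units.mul_inv_cancel_left]
  simp only [Units.mul_inv, mul_one]

end StateMaps

theorem discrete_left_right_state_matrix_relation_general {n : ℕ}
    (Gam : Matrix (Fin n) (Fin n) ℝ → Matrix (Fin n) (Fin n) ℝ)
    (xhat : Matrix (Fin n) (Fin n) ℝ) (hx : IsUnit xhat)
    (D : Matrix (Fin n) (Fin n) ℝ →L[ℝ] Matrix (Fin n) (Fin n) ℝ)
    (hG : IsUnit (Gam xhat))
    (xhatMinus : Matrix (Fin n) (Fin n) ℝ)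
    (hxm : xhatMinus = xhat * Gam xhat)
    (AL AR : Matrix (Fin n) (Fin n) ℝ →ₗ[ℝ] Matrix (Fin n) (Fin n) ℝ)
    (hAL : ∀ ε, AL ε = (Gam xhat)⁻¹ * ε * Gam xhat + (Gam xhat)⁻¹ * D (xhat * ε))
    (hAR : ∀ ε, AR ε = ε + xhat * D (ε * xhat) * (Gam xhat)⁻¹ * xhat⁻¹) :
    ∀ ε, AR ε = xhatMinus * AL (xhat⁻¹ * ε * xhat) * xhatMinus⁻¹ := by
  obtain ⟨x, rfl⟩ := hx
  obtain ⟨g, hg⟩ := hG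
  subst hxm
  rw [← hg] at hAL hAR ⊢
  intro ε
  have hL : ∀ δ, AL δ = leftStateMap x g D δ := fun δ => by
    rw [hAL, leftStateMap, coe_units_inv]
  have hR : AR ε = rightStateMap x g D ε := by
    rw [hAR, rightStateMap, coe_units_inv, coe_units_inv]
  simp only [hR, hL, ← Units.val_mul, ← coe_units_inv, rightStateMap_eq_conj_leftStateMap]

/-- **Relation between discrete-time L-IEKF and R-IEKF state matrices**
(Appendix): `A_R = Ad_{x̂⁻} ∘ A_L ∘ Ad_{x̂}⁻¹`, where `x̂⁻ = x̂ Γ(x̂)`,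
`A_L ε = Γ(x̂)⁻¹ ε Γ(x̂) + Γ(x̂)⁻¹ D(x̂ ε)` and
`A_R ε = ε + x̂ D(ε x̂) Γ(x̂)⁻¹ x̂⁻¹`, with `D` the Fréchet derivative of `Γ`
at `x̂`. -/
theorem discrete_left_right_state_matrix_relation {n : ℕ}
    (Gam : Matrix (Fin n) (Fin n) ℝ → Matrix (Fin n) (Fin n) ℝ)
    (xhat : Matrix (Fin n) (Fin n) ℝ) (hx : IsUnit xhat)
    (D : Matrix (Fin n) (Fin n) ℝ →L[ℝ] Matrix (Fin n) (Fin n) ℝ)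
    (hD : HasFDerivAt Gam D xhat)
    (hG : IsUnit (Gam xhat))
    (xhatMinus : Matrix (Fin n) (Fin n) ℝ)
    (hxm : xhatMinus = xhat * Gam xhat)
    (AL AR : Matrix (Fin n) (Fin n) ℝ →ₗ[ℝ] Matrix (Fin n) (Fin n) ℝ)
    (hAL : ∀ ε, AL ε = (Gam xhat)⁻¹ * ε * Gam xhat + (Gam xhat)⁻¹ * D (xhat * ε))
    (hAR : ∀ ε, AR ε = ε + xhat * D (ε * xhat) * (Gam xhat)⁻¹ * xhat⁻¹) :
    ∀ ε, AR ε = xhatMinus * AL (xhat⁻¹ * ε * xhat) * xhatMinus⁻¹ :=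
  discrete_left_right_state_matrix_relation_general Gam xhat hx D hG xhatMinus hxm AL AR hAL hAR
end
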